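/- For every n ≥ 0, the map B restricted to packed words of length n is a surjection onto the set of binary trees with multiplicities of size n; consequently, the sum of f(T) over all binary trees with multiplicities T of size n equals the total number of packed words of length n. -/

import Mathlib

open scoped Classical

/-- Words over the positive integers. -/
abbrev Word : Type := List ℕ+

/-- Evaluation of a word: number of occurrences of each letter. -/
def ev (w : Word) : ℕ+ → ℕ := fun a => w.count a

/-- A monoid congruence on the free monoid `(ℕ⁺)*`. -/
def IsCongruence (r : Word → Word → Prop) : Prop :=
  Equivalence r ∧ ∀ u v u' v', r u v → r u' v' → r (u ++ u') (v ++ v')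

/-- Restriction of a word to the letters belonging to a set `I`. -/
noncomputable def restrictTo (I : Set ℕ+) (w : Word) : Word :=
  w.filter fun a => decide (a ∈ I)

/-- `I` is an interval (order-convex subset) of `ℕ⁺`. -/
def IsIntervalSet (I : Set ℕ+) : Prop :=
  ∀ ⦃a b c : ℕ+⦄, a ∈ I → c ∈ I → a ≤ b → b ≤ c → b ∈ I

/-- Compatibility with restriction to alphabet intervals. -/
def CompatRestrict (r : Word → Word → Prop) : Prop :=
  ∀ I : Set ℕ+, IsIntervalSet I → ∀ u v, r u v → r (restrictTo I u) (restrictTo I v)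

/-- `r` is a `φ`-congruence. -/
def IsPhiCongruence (φ : Word → Word) (r : Word → Word → Prop) : Prop :=
  ∀ u v, r u v ↔ (r (φ u) (φ v) ∧ ev u = ev v)

/-- Standardization. -/
def std (w : Word) : Word :=
  (List.range w.length).map fun i =>
    ⟨((List.range w.length).countP fun j =>
        decide (w.getD j 1 < w.getD i 1 ∨ (w.getD j 1 = w.getD i 1 ∧ j < i))) + 1,
      Nat.succ_pos _⟩

/-- Packing. -/
def pack (w : Word) : Word :=
  w.map fun a => ⟨(w.dedup.countP fun b => decide (b < a)) + 1, Nat.succ_pos _⟩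

theorem parkBad_ex (w : Word) :
    ∃ d : ℕ, 1 ≤ d ∧ (w.countP fun a : ℕ+ => decide ((a : ℕ) ≤ d)) < d :=
  ⟨w.length + 1, Nat.succ_le_succ (Nat.zero_le _), by
    have h := List.countP_le_length (p := fun a : ℕ+ => decide ((a : ℕ) ≤ w.length + 1)) (l := w)
    omega⟩

/-- The smallest `d ≥ 1` such that fewer than `d` letters of `w` are `≤ d`. -/
noncomputable def parkBad (w : Word) : ℕ := Nat.find (parkBad_ex w)

/-- One pass of the parkization procedure, with fuel. -/
noncomputable def parkAux : ℕ → Word → Word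
  | 0, w => w
  | f + 1, w =>
    if parkBad w ≤ w.length then
      parkAux f (w.map fun a : ℕ+ => if parkBad w < (a : ℕ) then (a - 1 : ℕ+) else a)
    else w

/-- Parkization. The fuel `(sum of the letters)` always suffices,
since every pass strictly decreases the sum of the letters. -/
noncomputable def park (w : Word) : Word := parkAux (w.map fun a => (a : ℕ)).sum w

/-- Smallest monoid congruence containing `base`. -/
def CongClosure (base : Word → Word → Prop) (u v : Word) : Prop :=
  ∀ r : Word → Word → Prop, IsCongruence r → (∀ x y, base x y → r x y) → r u v

def sylvBase (x y : Word) : Prop :=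
  ∃ (a b c : ℕ+) (v : Word), a ≤ b ∧ b < c ∧
    x = a :: c :: (v ++ [b]) ∧ y = c :: a :: (v ++ [b])

/-- The sylvester congruence. -/
def sylv : Word → Word → Prop := CongClosure sylvBase

def stalBase (x y : Word) : Prop :=
  ∃ (a b : ℕ+) (v : Word), x = b :: a :: (v ++ [b]) ∧ y = a :: b :: (v ++ [b])

/-- The stalactic congruence. -/
def stal : Word → Word → Prop := CongClosure stalBase

def sylvSharpBase (x y : Word) : Prop :=
  ∃ (a b c : ℕ+) (v : Word), a < b ∧ b ≤ c ∧
    x = b :: (v ++ [a, c]) ∧ y = b :: (v ++ [c, a])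

/-- The #-sylvester congruence. -/
def sylvSharp : Word → Word → Prop := CongClosure sylvSharpBase

/-- The taïga congruence: join of the sylvester and stalactic congruences. -/
def taiga : Word → Word → Prop := CongClosure fun u v => sylv u v ∨ stal u v

/-- Planar binary trees with letter labels. -/
inductive BT : Type where
  | leaf : BT
  | node : BT → ℕ+ → BT → BT
deriving DecidableEq

/-- Binary search tree insertion of a letter. -/
def BT.insert : BT → ℕ+ → BT
  | .leaf, l => .node .leaf l .leaf
  | .node L b R, l => if l ≤ b then .node (L.insert l) b R else .node L b (R.insert l)

/-- Binary search tree of a word: insert the letters from right to left. -/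
def bst (w : Word) : BT := w.foldr (fun l t => t.insert l) .leaf

/-- Planar binary trees labelled by a letter and a multiplicity. -/
inductive BSTM : Type where
  | leaf : BSTM
  | node : BSTM → ℕ+ → ℕ+ → BSTM → BSTM   -- left, letter, multiplicity, right
deriving DecidableEq

/-- Insertion of a letter into a binary search tree with multiplicities. -/
def BSTM.insert : BSTM → ℕ+ → BSTM
  | .leaf, l => .node .leaf l 1 .leaf
  | .node L l' k R, l =>
    if l = l' then .node L l' (k + 1) R
    else if l < l' then .node (L.insert l) l' k R
    else .node L l' k (R.insert l)

/-- The `P`-symbol: insert the letters of `w` from right to left. -/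
def Pmap (w : Word) : BSTM := w.foldr (fun l t => t.insert l) .leaf

/-- Letters of a BSTM in left-to-right (infix) order. -/
def BSTM.letters : BSTM → List ℕ+
  | .leaf => []
  | .node L l _ R => L.letters ++ l :: R.letters

/-- The binary search tree property for a BSTM. -/
def BSTM.IsSearchTree : BSTM → Prop
  | .leaf => True
  | .node L l _ R =>
      (∀ x ∈ L.letters, x < l) ∧ (∀ x ∈ R.letters, l < x) ∧
        L.IsSearchTree ∧ R.IsSearchTree

/-- Total multiplicity of a letter in a BSTM. -/
def BSTM.mult : BSTM → ℕ+ → ℕ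
  | .leaf, _ => 0
  | .node L l k R, a => L.mult a + (if a = l then (k : ℕ) else 0) + R.mult a

/-- Size of a BSTM: sum of the multiplicities. -/
def BSTM.size : BSTM → ℕ
  | .leaf => 0
  | .node L _ k R => L.size + (k : ℕ) + R.size

/-- Planar binary trees with multiplicities. -/
inductive BTM : Type where
  | leaf : BTM
  | node : BTM → ℕ+ → BTM → BTM
deriving DecidableEq

/-- Size of a BTM: sum of the multiplicities. -/
def BTM.size : BTM → ℕ
  | .leaf => 0
  | .node L k R => L.size + (k : ℕ) + R.size

/-- Number of nodes of a BTM. -/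
def BTM.numNodes : BTM → ℕ
  | .leaf => 0
  | .node L _ R => L.numNodes + 1 + R.numNodes

/-- Forgetting the letters of a BSTM gives a BTM. -/
def forgetLetters : BSTM → BTM
  | .leaf => .leaf
  | .node L _ k R => .node (forgetLetters L) k (forgetLetters R)

/-- The `B`-symbol: the BTM underlying `P(w)`. -/
def Bmap (w : Word) : BTM := forgetLetters (Pmap w)

/-- A packed word: its set of letters is `{1, …, k}` for some `k`. -/
def IsPacked (w : Word) : Prop := ∀ a ∈ w, ∀ b : ℕ+, b ≤ a → b ∈ w

/-- Number of packed words inserting to the BTM `T`. -/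
noncomputable def fT (T : BTM) : ℕ :=
  Set.ncard {w : Word | IsPacked w ∧ Bmap w = T}

/-- The hook-type product over the subtrees of a BTM. -/
def hookProd : BTM → ℕ
  | .leaf => 1
  | .node L k R =>
      (BTM.node L k R).size * ((k : ℕ) - 1).factorial * hookProd L * hookProd R

/-- Label the nodes of a BTM in infix order starting from a given letter;
returns the labelled tree and the next unused letter. -/
def infixLabelAux : BTM → ℕ+ → BSTM × ℕ+
  | .leaf, n => (.leaf, n)
  | .node L k R, n =>
    let p := infixLabelAux L n
    let q := infixLabelAux R (p.2 + 1)
    (.node p.1 p.2 k q.1, q.2)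

/-- Label the nodes of a BTM by `1, …, k` in infix order. -/
def infixLabel (T : BTM) : BSTM := (infixLabelAux T 1).1

/-!
Each insertion adds one to the size of a BSTM, so `B` preserves size. For surjectivity, label the
nodes of `T` by `1, …, k` in infix order; this gives a search tree `S` with `forgetLetters S = T`.
Reading `S` in postfix order, each letter repeated by its multiplicity, gives a packed word `w`
with `P(w) = S`: inserting from right to left, the root letter is inserted first, after which all
letters of the right subtree go right and all letters of the left subtree go left. The sum formula
is then the decomposition of the finite set of packed words of length `n` into the fibres of `B`.
-/

theorem Set.finsum_mem_ncard_fiber {α β : Type*} {s : Set α} {t : Set β} {f : α → β}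
    (hs : s.Finite) (hf : Set.MapsTo f s t) :
    ∑ᶠ b ∈ t, {a ∈ s | f a = b}.ncard = s.ncard := by
  lift s to Finset α using hs
  have hsupp : t ∩ Function.support (fun b => {a ∈ (s : Set α) | f a = b}.ncard) =
      ↑(s.image f) ∩ Function.support (fun b => {a ∈ (s : Set α) | f a = b}.ncard) := by
    ext b
    rw [Set.mem_inter_iff, Set.mem_inter_iff, Function.mem_support,
      Set.fiber_ncard_ne_zero_iff_mem_image s.finite_toSet, Finset.coe_image]
    constructor
    · rintro ⟨-, hb⟩
      exact ⟨hb, hb⟩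
    · rintro ⟨-, ⟨a, ha, rfl⟩⟩
      exact ⟨hf ha, a, ha, rfl⟩
  rw [finsum_mem_eq_sum_of_inter_support_eq _ hsupp, Set.ncard_coe_finset,
    Finset.card_eq_sum_card_image f s]
  refine Finset.sum_congr rfl fun b _ => ?_
  rw [← Set.ncard_coe_finset, Finset.coe_filter]
  rfl

theorem List.finite_length_eq_of_forall_mem {α : Type*} {s : Set α} (hs : s.Finite) (n : ℕ) :
    {l : List α | l.length = n ∧ ∀ a ∈ l, a ∈ s}.Finite := by
  have := hs.to_subtype
  refine ((List.finite_length_eq s n).image (List.map (↑))).subset ?_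
  rintro l ⟨hl, hmem⟩
  lift l to List s using hmem
  exact ⟨l, by simpa using hl, rfl⟩

namespace BSTM

theorem size_insert (t : BSTM) (l : ℕ+) : (t.insert l).size = t.size + 1 := by
  induction t with
  | leaf => rfl
  | node L l' k R ihL ihR =>
    unfold BSTM.insert
    split_ifs <;> simp only [size, ihL, ihR, PNat.add_coe, PNat.one_coe] <;> omega

theorem insert_node_of_lt {a l : ℕ+} (h : a < l) (L R : BSTM) (k : ℕ+) :
    (node L l k R).insert a = node (L.insert a) l k R := by
  simp [BSTM.insert, h, h.ne]

theorem insert_node_of_gt {a l : ℕ+} (h : l < a) (L R : BSTM) (k : ℕ+) :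
    (node L l k R).insert a = node L l k (R.insert a) := by
  simp [BSTM.insert, h.ne', h.not_gt]

theorem foldr_insert_node_of_forall_lt {u : Word} {l : ℕ+} (h : ∀ a ∈ u, a < l)
    (L R : BSTM) (k : ℕ+) :
    u.foldr (fun x t => t.insert x) (node L l k R) =
      node (u.foldr (fun x t => t.insert x) L) l k R := by
  induction u with
  | nil => rfl
  | cons a u ih =>
    rw [List.foldr_cons, List.foldr_cons, ih fun x hx => h x (List.mem_cons_of_mem _ hx),
      insert_node_of_lt (h a List.mem_cons_self)]

theorem foldr_insert_node_of_forall_gt {u : Word} {l : ℕ+} (h : ∀ a ∈ u, l < a)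
    (L R : BSTM) (k : ℕ+) :
    u.foldr (fun x t => t.insert x) (node L l k R) =
      node L l k (u.foldr (fun x t => t.insert x) R) := by
  induction u with
  | nil => rfl
  | cons a u ih =>
    rw [List.foldr_cons, List.foldr_cons, ih fun x hx => h x (List.mem_cons_of_mem _ hx),
      insert_node_of_gt (h a List.mem_cons_self)]

def toWord : BSTM → Word
  | leaf => []
  | node L l k R => L.toWord ++ R.toWord ++ List.replicate k l

theorem mem_toWord {S : BSTM} {a : ℕ+} : a ∈ S.toWord ↔ a ∈ S.letters := by
  induction S with
  | leaf => rfl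
  | node L l k R ihL ihR =>
    simp only [toWord, letters, List.mem_append, List.mem_cons, List.mem_replicate, ihL, ihR,
      k.ne_zero, ne_eq, not_false_eq_true, true_and]
    tauto

theorem size_forgetLetters (S : BSTM) : (forgetLetters S).size = S.size := by
  induction S with
  | leaf => rfl
  | node L l k R ihL ihR => simp only [forgetLetters, BTM.size, size, ihL, ihR]

end BSTM

theorem size_Pmap (w : Word) : (Pmap w).size = w.length := by
  induction w with
  | nil => rfl
  | cons a w ih => rw [Pmap, List.foldr_cons, ← Pmap, BSTM.size_insert, ih, List.length_cons]

theorem size_Bmap (w : Word) : (Bmap w).size = w.length := by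
  rw [Bmap, BSTM.size_forgetLetters, size_Pmap]

theorem Pmap_replicate_succ (m : ℕ) (l : ℕ+) :
    Pmap (List.replicate (m + 1) l) = .node .leaf l m.succPNat .leaf := by
  induction m with
  | zero => rfl
  | succ m ih =>
    rw [List.replicate_succ, Pmap, List.foldr_cons, ← Pmap, ih]
    simp only [BSTM.insert, if_true]
    rfl

theorem Pmap_replicate (k l : ℕ+) : Pmap (List.replicate k l) = .node .leaf l k .leaf := by
  obtain ⟨m, rfl⟩ : ∃ m : ℕ, k = m.succPNat := ⟨k.natPred, (PNat.succPNat_natPred k).symm⟩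
  rw [Nat.succPNat_coe, Pmap_replicate_succ]

theorem Pmap_toWord {S : BSTM} (hS : S.IsSearchTree) : Pmap S.toWord = S := by
  induction S with
  | leaf => rfl
  | node L l k R ihL ihR =>
    obtain ⟨hL, hR, hLs, hRs⟩ := hS
    rw [BSTM.toWord, Pmap, List.foldr_append, List.foldr_append, ← Pmap, Pmap_replicate,
      BSTM.foldr_insert_node_of_forall_gt fun a ha => hR a (BSTM.mem_toWord.mp ha),
      BSTM.foldr_insert_node_of_forall_lt fun a ha => hL a (BSTM.mem_toWord.mp ha),
      ← Pmap, ← Pmap, ihL hLs, ihR hRs]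

theorem infixLabelAux_snd (T : BTM) (m : ℕ+) :
    ((infixLabelAux T m).2 : ℕ) = m + T.numNodes := by
  induction T generalizing m with
  | leaf => rfl
  | node L k R ihL ihR =>
    simp only [infixLabelAux, BTM.numNodes, ihR, PNat.add_coe, ihL, PNat.one_coe]
    ring

theorem mem_letters_infixLabelAux {T : BTM} {m a : ℕ+} :
    a ∈ (infixLabelAux T m).1.letters ↔ (m : ℕ) ≤ a ∧ (a : ℕ) < m + T.numNodes := by
  induction T generalizing m with
  | leaf => simp [infixLabelAux, BSTM.letters, BTM.numNodes]
  | node L k R ihL ihR =>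
    simp only [infixLabelAux, BSTM.letters, List.mem_append, List.mem_cons, ihL, ihR,
      infixLabelAux_snd, BTM.numNodes, PNat.add_coe, PNat.one_coe, ← PNat.coe_inj]
    omega

theorem isSearchTree_infixLabelAux (T : BTM) (m : ℕ+) : (infixLabelAux T m).1.IsSearchTree := by
  induction T generalizing m with
  | leaf => trivial
  | node L k R ihL ihR =>
    refine ⟨fun x hx => ?_, fun x hx => ?_, ihL m, ihR _⟩
    · rw [mem_letters_infixLabelAux] at hx
      rw [← PNat.coe_lt_coe, infixLabelAux_snd]
      exact hx.2
    · rw [mem_letters_infixLabelAux, PNat.add_coe, PNat.one_coe] at hx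
      rw [← PNat.coe_lt_coe]
      exact hx.1

theorem forgetLetters_infixLabelAux (T : BTM) (m : ℕ+) :
    forgetLetters (infixLabelAux T m).1 = T := by
  induction T generalizing m with
  | leaf => rfl
  | node L k R ihL ihR => simp only [infixLabelAux, forgetLetters, ihL, ihR]

theorem mem_letters_infixLabel {T : BTM} {a : ℕ+} :
    a ∈ (infixLabel T).letters ↔ (a : ℕ) ≤ T.numNodes := by
  rw [infixLabel, mem_letters_infixLabelAux, PNat.one_coe]
  have := a.pos
  omega

theorem exists_isPacked_Bmap_eq (T : BTM) : ∃ w : Word, IsPacked w ∧ Bmap w = T := by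
  refine ⟨(infixLabel T).toWord, fun a ha b hb => ?_, ?_⟩
  · rw [BSTM.mem_toWord, mem_letters_infixLabel] at ha ⊢
    exact ((PNat.coe_le_coe _ _).mpr hb).trans ha
  · rw [Bmap, infixLabel, Pmap_toWord (isSearchTree_infixLabelAux T 1),
      forgetLetters_infixLabelAux]

theorem IsPacked.coe_le_length {w : Word} (hw : IsPacked w) {a : ℕ+} (ha : a ∈ w) :
    (a : ℕ) ≤ w.length := by
  have hsub : Finset.Icc 1 a ⊆ w.toFinset := fun b hb =>
    List.mem_toFinset.mpr (hw a ha b (Finset.mem_Icc.mp hb).2)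
  have hcard := (Finset.card_le_card hsub).trans w.toFinset_card_le
  rwa [PNat.card_Icc, PNat.one_coe, Nat.add_sub_cancel] at hcard

theorem finite_setOf_isPacked_length_eq (n : ℕ) :
    {w : Word | IsPacked w ∧ w.length = n}.Finite := by
  refine (List.finite_length_eq_of_forall_mem
    ((Set.finite_le_nat n).preimage PNat.coe_injective.injOn) n).subset ?_
  rintro w ⟨hw, rfl⟩
  exact ⟨rfl, fun a ha => hw.coe_le_length ha⟩

theorem fT_eq_ncard_fiber {n : ℕ} {T : BTM} (hT : T.size = n) :
    fT T = {w ∈ {w : Word | IsPacked w ∧ w.length = n} | Bmap w = T}.ncard := by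
  rw [fT]
  congr 1
  ext w
  simp only [Set.mem_ofPred_eq]
  constructor
  · rintro ⟨hw, rfl⟩
    exact ⟨⟨hw, by rw [← size_Bmap, hT]⟩, rfl⟩
  · rintro ⟨⟨hw, -⟩, hB⟩
    exact ⟨hw, hB⟩

theorem Bmap_surjective_and_sum (n : ℕ) :
    (∀ w : Word, IsPacked w → w.length = n → (Bmap w).size = n) ∧
    (∀ T : BTM, T.size = n → ∃ w : Word, IsPacked w ∧ w.length = n ∧ Bmap w = T) ∧
    (∑ᶠ T ∈ {T : BTM | T.size = n}, fT T) =
      Set.ncard {w : Word | IsPacked w ∧ w.length = n} := by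
  refine ⟨fun w _ hw => by rw [size_Bmap, hw], fun T hT => ?_, ?_⟩
  · obtain ⟨w, hw, hB⟩ := exists_isPacked_Bmap_eq T
    exact ⟨w, hw, by rw [← size_Bmap, hB, hT], hB⟩
  · calc ∑ᶠ T ∈ {T : BTM | T.size = n}, fT T
        = ∑ᶠ T ∈ {T : BTM | T.size = n},
            {w ∈ {w : Word | IsPacked w ∧ w.length = n} | Bmap w = T}.ncard :=
          finsum_mem_congr rfl fun _ hT => fT_eq_ncard_fiber hT
      _ = _ := Set.finsum_mem_ncard_fiber (finite_setOf_isPacked_length_eq n)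
          fun w hw => (size_Bmap w).trans hw.2
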